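/- For all r ≥ 1 and s,t ≥ 2, RKG_r(s,t) ≥ R(s,t) + 2r - 2. Equivalently, for n = R(s,t) + 2r - 3 there exists a red/blue edge-coloring of KG(n,r) with no red K_s and no blue K_t. -/
import Mathlib


open Finset

/-- A clique in the Kneser graph `KG(n,r)`: a family of pairwise disjoint
`r`-element subsets of `[n] = {0, …, n-1}`. -/
def IsKneserClique (n r : ℕ) (S : Finset (Finset ℕ)) : Prop :=
  (∀ A ∈ S, A ⊆ Finset.range n ∧ A.card = r) ∧
  (S : Set (Finset ℕ)).Pairwise Disjoint

/-- A clique all of whose edges get color `b` under the edge-coloring `c`. -/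
def MonoClique (c : Finset ℕ → Finset ℕ → Bool) (b : Bool) (S : Finset (Finset ℕ)) : Prop :=
  ∀ A ∈ S, ∀ B ∈ S, A ≠ B → c A B = b

/-- `n` is Ramsey for the Kneser graph `KG(n,r)`: every red/blue edge-coloring
contains a red `s`-clique or a blue `t`-clique. -/
def KneserRamseyProp (n r s t : ℕ) : Prop :=
  ∀ c : Finset ℕ → Finset ℕ → Bool, (∀ A B, c A B = c B A) →
    (∃ S : Finset (Finset ℕ), IsKneserClique n r S ∧ S.card = s ∧ MonoClique c true S) ∨
    (∃ S : Finset (Finset ℕ), IsKneserClique n r S ∧ S.card = t ∧ MonoClique c false S)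

/-- The `r`-Kneser Ramsey number `RKG_r(s,t)`. -/
noncomputable def RKG (r s t : ℕ) : ℕ := sInf {n | KneserRamseyProp n r s t}

/-- `n` is Ramsey for `(s,t)`: every red/blue edge-coloring of the complete
graph on `[n]` contains a red `K_s` or a blue `K_t`. -/
def RamseyProp (n s t : ℕ) : Prop :=
  ∀ c : ℕ → ℕ → Bool, (∀ u v, c u v = c v u) →
    (∃ S : Finset ℕ, S ⊆ Finset.range n ∧ S.card = s ∧
      ∀ u ∈ S, ∀ v ∈ S, u ≠ v → c u v = true) ∨
    (∃ S : Finset ℕ, S ⊆ Finset.range n ∧ S.card = t ∧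
      ∀ u ∈ S, ∀ v ∈ S, u ≠ v → c u v = false)

/-- The classical Ramsey number `R(s,t)`. -/
noncomputable def ramseyNumber (s t : ℕ) : ℕ := sInf {n | RamseyProp n s t}

lemma ramsey_subset {n s t : ℕ} (h : RamseyProp n s t) (c : ℕ → ℕ → Bool)
    (hsym : ∀ u v, c u v = c v u) (T : Finset ℕ) (hT : T.card = n) :
    (∃ S, S ⊆ T ∧ S.card = s ∧ ∀ u ∈ S, ∀ v ∈ S, u ≠ v → c u v = true) ∨
    (∃ S, S ⊆ T ∧ S.card = t ∧ ∀ u ∈ S, ∀ v ∈ S, u ≠ v → c u v = false) := by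
  set e := T.orderEmbOfFin hT with he
  set f : ℕ → ℕ := fun u => if h : u < n then (e ⟨u, h⟩ : ℕ) else 0 with hf
  have hfT : ∀ u < n, f u ∈ T := by
    intro u hu
    simp only [hf, dif_pos hu]
    exact T.orderEmbOfFin_mem hT _
  have hfinj : ∀ u < n, ∀ v < n, f u = f v → u = v := by
    intro u hu v hv huv
    simp only [hf, dif_pos hu, dif_pos hv] at huv
    have := e.injective huv
    exact congrArg Fin.val this
  have key : ∀ (b : Bool) (m : ℕ) (S : Finset ℕ), S ⊆ Finset.range n → S.card = m →
      (∀ u ∈ S, ∀ v ∈ S, u ≠ v → c (f u) (f v) = b) →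
      ∃ S', S' ⊆ T ∧ S'.card = m ∧ ∀ u ∈ S', ∀ v ∈ S', u ≠ v → c u v = b := by
    intro b m S hS hcard hmono
    refine ⟨S.image f, ?_, ?_, ?_⟩
    · intro x hx
      obtain ⟨u, hu, rfl⟩ := mem_image.mp hx
      exact hfT u (mem_range.mp (hS hu))
    · rw [card_image_of_injOn, hcard]
      intro u hu v hv huv
      exact hfinj u (mem_range.mp (hS hu)) v (mem_range.mp (hS hv)) huv
    · intro x hx y hy hxy
      obtain ⟨u, hu, rfl⟩ := mem_image.mp hx
      obtain ⟨v, hv, rfl⟩ := mem_image.mp hy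
      exact hmono u hu v hv (fun h => hxy (by rw [h]))
  rcases h (fun u v => c (f u) (f v)) (fun u v => hsym _ _) with
    ⟨S, hS, hcard, hmono⟩ | ⟨S, hS, hcard, hmono⟩
  · exact Or.inl (key true s S hS hcard hmono)
  · exact Or.inr (key false t S hS hcard hmono)

lemma ramsey_step {s t n₁ n₂ : ℕ} (h1 : RamseyProp n₁ s (t+1)) (h2 : RamseyProp n₂ (s+1) t) :
    RamseyProp (n₁ + n₂ + 1) (s+1) (t+1) := by
  intro c hsym
  set v := n₁ + n₂ with hv
  set R := (Finset.range v).filter (fun u => c v u = true) with hR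
  set B := (Finset.range v).filter (fun u => ¬ (c v u = true)) with hB
  have hRB : R.card + B.card = v := by
    rw [hR, hB, card_filter_add_card_filter_not, card_range]
  by_cases hcase : n₁ ≤ R.card
  · obtain ⟨T, hTR, hTc⟩ := Finset.exists_subset_card_eq hcase
    rcases ramsey_subset h1 c hsym T hTc with ⟨S, hST, hSc, hSm⟩ | ⟨S, hST, hSc, hSm⟩
    · left
      have hSR : S ⊆ R := hST.trans hTR
      have hSv : S ⊆ Finset.range v := hSR.trans (filter_subset _ _)
      have hvS : v ∉ S := fun h => (mem_range.mp (hSv h)).false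
      refine ⟨insert v S, ?_, ?_, ?_⟩
      · intro x hx
        rcases mem_insert.mp hx with rfl | hx
        · exact mem_range.mpr (Nat.lt_succ_self _)
        · exact mem_range.mpr (Nat.lt_succ_of_lt (mem_range.mp (hSv hx)))
      · rw [card_insert_of_notMem hvS, hSc]
      · intro x hx y hy hxy
        rcases mem_insert.mp hx with rfl | hx
        · rcases mem_insert.mp hy with rfl | hy
          · exact absurd rfl hxy
          · exact (mem_filter.mp (hSR hy)).2
        · rcases mem_insert.mp hy with rfl | hy
          · rw [hsym]; exact (mem_filter.mp (hSR hx)).2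
          · exact hSm x hx y hy hxy
    · right
      exact ⟨S, (hST.trans (hTR.trans (filter_subset _ _))).trans
        (range_subset_range.mpr (Nat.le_succ _)), hSc, hSm⟩
  · have hcase2 : n₂ ≤ B.card := by omega
    obtain ⟨T, hTB, hTc⟩ := Finset.exists_subset_card_eq hcase2
    rcases ramsey_subset h2 c hsym T hTc with ⟨S, hST, hSc, hSm⟩ | ⟨S, hST, hSc, hSm⟩
    · left
      exact ⟨S, (hST.trans (hTB.trans (filter_subset _ _))).trans
        (range_subset_range.mpr (Nat.le_succ _)), hSc, hSm⟩
    · right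
      have hSB : S ⊆ B := hST.trans hTB
      have hSv : S ⊆ Finset.range v := hSB.trans (filter_subset _ _)
      have hvS : v ∉ S := fun h => (mem_range.mp (hSv h)).false
      refine ⟨insert v S, ?_, ?_, ?_⟩
      · intro x hx
        rcases mem_insert.mp hx with rfl | hx
        · exact mem_range.mpr (Nat.lt_succ_self _)
        · exact mem_range.mpr (Nat.lt_succ_of_lt (mem_range.mp (hSv hx)))
      · rw [card_insert_of_notMem hvS, hSc]
      · intro x hx y hy hxy
        rcases mem_insert.mp hx with rfl | hx
        · rcases mem_insert.mp hy with rfl | hy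
          · exact absurd rfl hxy
          · have := (mem_filter.mp (hSB hy)).2
            simpa using this
        · rcases mem_insert.mp hy with rfl | hy
          · rw [hsym]
            have := (mem_filter.mp (hSB hx)).2
            simpa using this
          · exact hSm x hx y hy hxy

lemma ramsey_exists : ∀ s t : ℕ, ∃ n, RamseyProp n s t := by
  intro s
  induction s with
  | zero => exact fun t => ⟨0, fun c _ => Or.inl ⟨∅, by simp, by simp, by simp⟩⟩
  | succ s ih =>
    intro t
    induction t with
    | zero => exact ⟨0, fun c _ => Or.inr ⟨∅, by simp, by simp, by simp⟩⟩
    | succ t iht =>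
      obtain ⟨n₁, h1⟩ := ih (t+1)
      obtain ⟨n₂, h2⟩ := iht
      exact ⟨n₁ + n₂ + 1, ramsey_step h1 h2⟩

lemma kneser_exists_of_ramsey {N s t : ℕ} (r : ℕ) (hr : 1 ≤ r) (hN : RamseyProp N s t) :
    KneserRamseyProp (N * r) r s t := by
  intro c hsym
  set g : ℕ → Finset ℕ := fun i => Finset.Ico (i*r) (i*r + r) with hg
  have hg_mem : ∀ i, i*r ∈ g i := by
    intro i; simp [hg, mem_Ico]; omega
  have hg_inj : Function.Injective g := by
    intro i j hij
    have h1 := hg_mem i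
    rw [hij] at h1
    have h2 := hg_mem j
    rw [← hij] at h2
    simp only [hg, mem_Ico] at h1 h2
    have : i * r = j * r := le_antisymm h2.1 h1.1
    exact Nat.eq_of_mul_eq_mul_right hr this
  have key : ∀ (b : Bool) (m : ℕ) (S : Finset ℕ), S ⊆ Finset.range N → S.card = m →
      (∀ u ∈ S, ∀ v ∈ S, u ≠ v → c (g u) (g v) = b) →
      ∃ S', IsKneserClique (N*r) r S' ∧ S'.card = m ∧ MonoClique c b S' := by
    intro b m S hS hcard hmono
    refine ⟨S.image g, ⟨?_, ?_⟩, ?_, ?_⟩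
    · intro A hA
      obtain ⟨i, hi, rfl⟩ := mem_image.mp hA
      constructor
      · intro x hx
        simp only [hg, mem_Ico] at hx
        have hiN : i < N := mem_range.mp (hS hi)
        have : i * r + r ≤ N * r := by
          calc i * r + r = (i+1) * r := by ring
          _ ≤ N * r := Nat.mul_le_mul_right r hiN
        exact mem_range.mpr (lt_of_lt_of_le hx.2 this)
      · simp [hg]
    · intro A hA B hB hAB
      obtain ⟨i, hi, rfl⟩ := mem_image.mp hA
      obtain ⟨j, hj, rfl⟩ := mem_image.mp hB
      have hij : i ≠ j := fun h => hAB (by rw [h])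
      rw [Finset.disjoint_left]
      intro x hx hx'
      simp only [hg, mem_Ico] at hx hx'
      rcases lt_or_gt_of_ne hij with h | h
      · have : i * r + r ≤ j * r := by
          calc i * r + r = (i+1) * r := by ring
          _ ≤ j * r := Nat.mul_le_mul_right r h
        exact absurd (lt_of_lt_of_le hx.2 (this.trans hx'.1)) (lt_irrefl x)
      · have : j * r + r ≤ i * r := by
          calc j * r + r = (j+1) * r := by ring
          _ ≤ i * r := Nat.mul_le_mul_right r h
        exact absurd (lt_of_lt_of_le hx'.2 (this.trans hx.1)) (lt_irrefl x)
    · rw [card_image_of_injective _ hg_inj, hcard]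
    · intro A hA B hB hAB
      obtain ⟨i, hi, rfl⟩ := mem_image.mp hA
      obtain ⟨j, hj, rfl⟩ := mem_image.mp hB
      exact hmono i hi j hj (fun h => hAB (by rw [h]))
  rcases hN (fun u v => c (g u) (g v)) (fun u v => hsym _ _) with
    ⟨S, hS, hcard, hmono⟩ | ⟨S, hS, hcard, hmono⟩
  · exact Or.inl (key true s S hS hcard hmono)
  · exact Or.inr (key false t S hS hcard hmono)

lemma kneser_ge {n r s t : ℕ} (hr : 1 ≤ r) (hs : 2 ≤ s) (ht : 2 ≤ t)
    (h : KneserRamseyProp n r s t) : 2*r ≤ n := by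
  rcases h (fun _ _ => true) (fun _ _ => rfl) with
    ⟨S, hcl, hcard, _⟩ | ⟨S, _, hcard, hmono⟩
  · obtain ⟨A, hA, B, hB, hne⟩ := Finset.one_lt_card.mp (by omega : 1 < S.card)
    have hd : Disjoint A B := hcl.2 hA hB hne
    have hAB : (A ∪ B).card = 2 * r := by
      rw [card_union_of_disjoint hd, (hcl.1 A hA).2, (hcl.1 B hB).2]; ring
    have hsub : A ∪ B ⊆ Finset.range n :=
      union_subset (hcl.1 A hA).1 (hcl.1 B hB).1
    have := card_le_card hsub
    rwa [hAB, card_range] at this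
  · obtain ⟨A, hA, B, hB, hne⟩ := Finset.one_lt_card.mp (by omega : 1 < S.card)
    have := hmono A hA B hB hne
    simp at this

lemma kneser_to_ramsey {n r s t : ℕ} (hr : 1 ≤ r) (hn : 2*r ≤ n)
    (h : KneserRamseyProp n r s t) : RamseyProp (n - 2*r + 2) s t := by
  intro c hsym
  set k := n - 2*r + 1 with hk
  set φ : Finset ℕ → ℕ := fun A => if h : A.Nonempty then min (A.min' h) k else 0 with hφ
  have hφlt : ∀ A, φ A < n - 2*r + 2 := by
    intro A
    simp only [hφ]
    split
    · exact lt_of_le_of_lt (min_le_right _ _) (by omega)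
    · omega
  have hφne : ∀ A B, A ⊆ Finset.range n → A.card = r → B ⊆ Finset.range n → B.card = r →
      Disjoint A B → φ A ≠ φ B := by
    intro A B hA hAc hB hBc hd heq
    have hAne : A.Nonempty := card_pos.mp (by omega)
    have hBne : B.Nonempty := card_pos.mp (by omega)
    simp only [hφ, dif_pos hAne, dif_pos hBne] at heq
    by_cases ha : A.min' hAne < k
    · by_cases hb : B.min' hBne < k
      · rw [min_eq_left ha.le, min_eq_left hb.le] at heq
        have h1 := A.min'_mem hAne
        have h2 := B.min'_mem hBne
        rw [heq] at h1
        exact (Finset.disjoint_left.mp hd h1) h2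
      · rw [min_eq_left ha.le, min_eq_right (by omega)] at heq
        omega
    · by_cases hb : B.min' hBne < k
      · rw [min_eq_right (by omega), min_eq_left hb.le] at heq
        omega
      · -- both mins ≥ k : A ∪ B ⊆ Ico k n of size 2r-1, contradiction
        have hsub : A ∪ B ⊆ Finset.Ico k n := by
          intro x hx
          rcases mem_union.mp hx with hx | hx
          · exact mem_Ico.mpr ⟨le_trans (by omega) (A.min'_le x hx),
              mem_range.mp (hA hx)⟩
          · exact mem_Ico.mpr ⟨le_trans (by omega) (B.min'_le x hx),
              mem_range.mp (hB hx)⟩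
        have hcu : (A ∪ B).card = 2 * r := by
          rw [card_union_of_disjoint hd, hAc, hBc]; ring
        have := card_le_card hsub
        rw [hcu, Nat.card_Ico] at this
        omega
  have key : ∀ (b : Bool) (m : ℕ) (S : Finset (Finset ℕ)), IsKneserClique n r S →
      S.card = m → MonoClique (fun A B => c (φ A) (φ B)) b S →
      ∃ S', S' ⊆ Finset.range (n - 2*r + 2) ∧ S'.card = m ∧
        ∀ u ∈ S', ∀ v ∈ S', u ≠ v → c u v = b := by
    intro b m S hcl hcard hmono
    refine ⟨S.image φ, ?_, ?_, ?_⟩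
    · intro x hx
      obtain ⟨A, hA, rfl⟩ := mem_image.mp hx
      exact mem_range.mpr (hφlt A)
    · rw [card_image_of_injOn, hcard]
      intro A hA B hB hAB
      by_contra hne
      exact hφne A B (hcl.1 A hA).1 (hcl.1 A hA).2 (hcl.1 B hB).1 (hcl.1 B hB).2
        (hcl.2 hA hB hne) hAB
    · intro x hx y hy hxy
      obtain ⟨A, hA, rfl⟩ := mem_image.mp hx
      obtain ⟨B, hB, rfl⟩ := mem_image.mp hy
      exact hmono A hA B hB (fun h => hxy (by rw [h]))
  rcases h (fun A B => c (φ A) (φ B)) (fun A B => hsym _ _) with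
    ⟨S, hcl, hcard, hmono⟩ | ⟨S, hcl, hcard, hmono⟩
  · exact Or.inl (key true s S hcl hcard hmono)
  · exact Or.inr (key false t S hcl hcard hmono)

theorem rkg_ge_ramsey_add (r s t : ℕ) (hr : 1 ≤ r) (hs : 2 ≤ s) (ht : 2 ≤ t) :
    ramseyNumber s t + 2 * r - 2 ≤ RKG r s t := by
  obtain ⟨N, hN⟩ := ramsey_exists s t
  have hnonempty : {n | KneserRamseyProp n r s t}.Nonempty :=
    ⟨N * r, kneser_exists_of_ramsey r hr hN⟩
  have hmem : KneserRamseyProp (RKG r s t) r s t := Nat.sInf_mem hnonempty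
  have h2r : 2 * r ≤ RKG r s t := kneser_ge hr hs ht hmem
  have hram : RamseyProp (RKG r s t - 2*r + 2) s t := kneser_to_ramsey hr h2r hmem
  have hle : ramseyNumber s t ≤ RKG r s t - 2*r + 2 := Nat.sInf_le hram
  omega
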